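/- arXiv:2201.08874 — 4 statements merged into one kernel-verified Lean document; each statement's English description precedes it below -/
import Mathlib

section
/- (Poisson-type summation) For any compactly supported locally constant f on K/Q_ℓ and any t ∈ K, ∫_{o_K} f(x+t) dx = q^{-δ/2} ∫_{𝔡^{-1}} f̂(y) ζ^{-tr(ty)} dy. -/
/-!
Both sides are linear in `f`, so it suffices to treat the indicator of a ball `a + π^N O`. Write
`χ = ψ ∘ tr`. The Fourier transform of that indicator at `b` is `χ(ab) vol(N)` when `x ↦ χ(xb)`
is trivial on `π^N O`, and `0` otherwise: then the ball splits into finitely many cosets of a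
smaller ball on each of which the character is constant, and what is left is the sum of a
nontrivial character of `O/π^k`. On `𝔡⁻¹ = π^{-δ}O` the transform is therefore again a ball
indicator times a character, so the same formula evaluates the right-hand side, while the
left-hand side is the volume of the intersection of two balls. The constants agree because `q`
is invertible in `Cp`: it is a power of `ℓ`, and `ψ(1/ℓ)` is a nontrivial `ℓ`-th root of unity.
-/

open scoped Classical

theorem exists_dvd_pow_of_forall_dvd {A : Type*} [CommMonoidWithZero A] [WfDvdMonoid A] {p : A}
    (hp : ¬IsUnit p) (hdvd : ∀ c, ¬IsUnit c → p ∣ c) {c : A} (hc : c ≠ 0) :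
    ∃ m : ℕ, c ∣ p ^ m := by
  induction c using (wellFounded_dvdNotUnit (α := A)).induction with | h c ih => ?_
  by_cases hu : IsUnit c
  · exact ⟨0, hu.dvd⟩
  obtain ⟨d, rfl⟩ := hdvd c hu
  have hd : d ≠ 0 := right_ne_zero_of_mul hc
  obtain ⟨m, hm⟩ := ih d ⟨hd, p, hp, mul_comm p d ▸ rfl⟩ hd
  exact ⟨m + 1, pow_succ' p m ▸ mul_dvd_mul_left p hm⟩

theorem natCard_quotient_eq_prime_pow {A : Type*} [CommRing A] {I : Ideal A} [Finite (A ⧸ I)]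
    {p : ℕ} [Fact p.Prime] (hp : (p : A) ∈ I) : ∃ n, Nat.card (A ⧸ I) = p ^ n := by
  let := AddCommGroup.zmodModule (n := p) (G := A ⧸ I) fun x => by
    obtain ⟨a, rfl⟩ := Ideal.Quotient.mk_surjective x
    rw [nsmul_eq_mul, ← map_natCast (Ideal.Quotient.mk I), ← map_mul,
      Ideal.Quotient.eq_zero_iff_mem]
    exact I.mul_mem_right a hp
  have : Module.Finite (ZMod p) (A ⧸ I) := Module.Finite.of_finite
  exact ⟨_, by rw [Module.natCard_eq_pow_finrank (K := ZMod p), Nat.card_zmod]⟩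

theorem natCast_ne_zero_of_pow_eq_one {F : Type*} [Field F] {p : ℕ} [hp : Fact p.Prime] {ζ : F}
    (hζ : ζ ^ p = 1) (hζ1 : ζ ≠ 1) : (p : F) ≠ 0 := by
  intro h
  have : CharP F p := (CharP.charP_iff_prime_eq_zero hp.out).mpr h
  exact hζ1 (frobenius_inj F p (by simpa [frobenius_def] using hζ))

theorem AddChar.natCast_ne_zero_of_forall_eq_one_iff {ℓ : ℕ} [Fact ℓ.Prime] {F : Type*}
    [Field F] {ψ : AddChar ℚ_[ℓ] F} (hψ : ∀ x, ψ x = 1 ↔ ‖x‖ ≤ 1) : (ℓ : F) ≠ 0 := by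
  have hℓ : ‖(ℓ : ℚ_[ℓ])⁻¹‖ = ℓ := by rw [norm_inv, Padic.norm_p, inv_inv]
  have hp : ℓ.Prime := Fact.out
  refine natCast_ne_zero_of_pow_eq_one (ζ := ψ (ℓ : ℚ_[ℓ])⁻¹) ?_ ?_
  · rw [← AddChar.map_nsmul_eq_pow, nsmul_eq_mul, mul_inv_cancel₀ (mod_cast hp.ne_zero), hψ]
    simp
  · rw [Ne, hψ, hℓ, not_le]
    exact_mod_cast hp.one_lt

section IntegralClosure

variable {ℓ : ℕ} [Fact ℓ.Prime] {K : Type*} [Field K] [Algebra ℚ_[ℓ] K]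
  [Algebra ℤ_[ℓ] K] [IsScalarTower ℤ_[ℓ] ℚ_[ℓ] K] {O : Subring K}

theorem norm_le_one_of_isIntegral_algebraMap {z : ℚ_[ℓ]}
    (hz : IsIntegral ℤ_[ℓ] (algebraMap ℚ_[ℓ] K z)) : ‖z‖ ≤ 1 := by
  obtain ⟨y, rfl⟩ := IsIntegrallyClosed.isIntegral_iff.mp
    ((isIntegral_algebraMap_iff (algebraMap ℚ_[ℓ] K).injective).mp hz)
  exact y.norm_le_one

theorem not_isUnit_natCast (hO : ∀ x : K, x ∈ O ↔ IsIntegral ℤ_[ℓ] x) :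
    ¬IsUnit (ℓ : O) := by
  rintro ⟨⟨_, v, -, hv⟩, rfl⟩
  have hvK : (v : K) = algebraMap ℚ_[ℓ] K (ℓ : ℚ_[ℓ])⁻¹ := by
    rw [map_inv₀, map_natCast]
    exact eq_inv_of_mul_eq_one_left (by simpa using congrArg Subtype.val hv)
  have := norm_le_one_of_isIntegral_algebraMap (hvK ▸ (hO v).mp v.2)
  rw [norm_inv, Padic.norm_p, inv_inv] at this
  exact this.not_gt (mod_cast (Fact.out : ℓ.Prime).one_lt)

theorem isNoetherianRing_of_forall_mem_iff_isIntegral [FiniteDimensional ℚ_[ℓ] K]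
    (hO : ∀ x : K, x ∈ O ↔ IsIntegral ℤ_[ℓ] x) : IsNoetherianRing O := by
  have := integralClosure.isNoetherianRing (A := ℤ_[ℓ]) (K := ℚ_[ℓ]) (L := K)
  exact isNoetherianRing_of_ringEquiv _
    (RingEquiv.subringCongr (Subring.ext fun x => (hO x).symm) :
      (integralClosure ℤ_[ℓ] K).toSubring ≃+* O)

theorem exists_pow_mul_mem [FiniteDimensional ℚ_[ℓ] K]
    (hO : ∀ x : K, x ∈ O ↔ IsIntegral ℤ_[ℓ] x) {ϖ : O} (hϖ : ¬IsUnit ϖ)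
    (hdvd : ∀ c : O, ¬IsUnit c → ϖ ∣ c) (x : K) : ∃ n : ℕ, (ϖ : K) ^ n * x ∈ O := by
  have := isNoetherianRing_of_forall_mem_iff_isIntegral hO
  obtain ⟨y, hy, hyx⟩ := ((IsFractionRing.isAlgebraic_iff ℤ_[ℓ] ℚ_[ℓ] K).mpr
    (Algebra.IsAlgebraic.isAlgebraic x)).exists_integral_multiple
  have hinj : Function.Injective (algebraMap ℤ_[ℓ] K) := by
    rw [IsScalarTower.algebraMap_eq ℤ_[ℓ] ℚ_[ℓ] K]
    exact (algebraMap ℚ_[ℓ] K).injective.comp (IsFractionRing.injective ℤ_[ℓ] ℚ_[ℓ])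
  have hc : (⟨algebraMap ℤ_[ℓ] K y, (hO _).mpr isIntegral_algebraMap⟩ : O) ≠ 0 :=
    fun h => hy (hinj (by simpa using congrArg Subtype.val h))
  obtain ⟨n, d, hd⟩ := exists_dvd_pow_of_forall_dvd hϖ hdvd hc
  refine ⟨n, ?_⟩
  rw [show (ϖ : K) ^ n = algebraMap ℤ_[ℓ] K y * d from congrArg Subtype.val hd, mul_right_comm,
    ← Algebra.smul_def]
  exact O.mul_mem ((hO _).mpr hyx) d.2

end IntegralClosure

section AdicBall

variable {K : Type*} [Field K] {O : Subring K} {π : K}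

def adicBall (O : Subring K) (π a : K) (N : ℤ) : Set K :=
  {x | ∃ y ∈ O, x = a + π ^ N * y}

theorem zpow_mem_of_nonneg (hπO : π ∈ O) {n : ℤ} (hn : 0 ≤ n) : π ^ n ∈ O := by
  lift n to ℕ using hn
  exact zpow_natCast π n ▸ O.pow_mem hπO n

theorem zpow_mul_mem_of_le (hπ : π ≠ 0) (hπO : π ∈ O) {i j : ℤ} (hij : i ≤ j) {x : K}
    (h : π ^ i * x ∈ O) : π ^ j * x ∈ O := by
  rw [show j = (j - i) + i by ring, zpow_add₀ hπ, mul_assoc]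
  exact O.mul_mem (zpow_mem_of_nonneg hπO (by omega)) h

theorem zpow_mul_mem_and_zpow_mul_mem_iff (hπ : π ≠ 0) (hπO : π ∈ O) {i j : ℤ} {x : K} :
    (π ^ i * x ∈ O ∧ π ^ j * x ∈ O) ↔ π ^ min i j * x ∈ O := by
  rcases le_total i j with hij | hij
  · rw [min_eq_left hij]
    exact ⟨And.left, fun h => ⟨h, zpow_mul_mem_of_le hπ hπO hij h⟩⟩
  · rw [min_eq_right hij]
    exact ⟨And.right, fun h => ⟨zpow_mul_mem_of_le hπ hπO hij h, h⟩⟩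

theorem mem_adicBall_iff (hπ : π ≠ 0) {a x : K} {N : ℤ} :
    x ∈ adicBall O π a N ↔ π ^ (-N) * (x - a) ∈ O := by
  have hπN : π ^ N ≠ 0 := zpow_ne_zero N hπ
  refine ⟨fun ⟨y, hy, hx⟩ => ?_, fun h => ⟨_, h, ?_⟩⟩
  · rwa [hx, add_sub_cancel_left, zpow_neg, inv_mul_cancel_left₀ hπN]
  · rw [zpow_neg, mul_inv_cancel_left₀ hπN, add_sub_cancel]

theorem adicBall_zero_zero : adicBall O π 0 0 = O := by
  ext x
  simp [adicBall]

theorem preimage_add_adicBall (hπ : π ≠ 0) (t a : K) (N : ℤ) :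
    (· + t) ⁻¹' adicBall O π a N = adicBall O π (a - t) N := by
  ext x
  rw [Set.mem_preimage, mem_adicBall_iff hπ, mem_adicBall_iff hπ, sub_sub_eq_add_sub]

theorem adicBall_subset_of_mem (hπ : π ≠ 0) (hπO : π ∈ O) {a b : K} {M N : ℤ} (hMN : M ≤ N)
    (hb : b ∈ adicBall O π a M) : adicBall O π b N ⊆ adicBall O π a M := by
  intro x hx
  rw [mem_adicBall_iff hπ] at hb hx ⊢
  rw [show x - a = (x - b) + (b - a) by ring, mul_add]
  exact O.add_mem (zpow_mul_mem_of_le hπ hπO (by omega) hx) hb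

theorem adicBall_inter_adicBall_of_le (hπ : π ≠ 0) (hπO : π ∈ O) {a b : K} {M N : ℤ}
    (hMN : M ≤ N) :
    adicBall O π a M ∩ adicBall O π b N =
      if b ∈ adicBall O π a M then adicBall O π b N else ∅ := by
  split_ifs with hb
  · exact Set.inter_eq_right.mpr (adicBall_subset_of_mem hπ hπO hMN hb)
  refine Set.eq_empty_of_forall_notMem fun x ⟨hxa, hxb⟩ => hb ?_
  rw [mem_adicBall_iff hπ] at hxa hxb ⊢
  rw [show b - a = (x - a) - (x - b) by ring, mul_sub]
  exact O.sub_mem hxa (zpow_mul_mem_of_le hπ hπO (by omega) hxb)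

theorem mem_adicBall_add_zpow_mul_iff (hπ : π ≠ 0) {a c x : K} {M n : ℤ} :
    x ∈ adicBall O π (a + π ^ M * c) (M + n) ↔ π ^ (-M) * (x - a) ∈ adicBall O π c n := by
  rw [mem_adicBall_iff hπ, mem_adicBall_iff hπ, neg_add, zpow_add₀ hπ, zpow_neg, zpow_neg]
  field_simp
  ring_nf

theorem coe_mem_adicBall_iff (hπO : π ∈ O) (u c : O) (k : ℕ) :
    (u : K) ∈ adicBall O π c k ↔
      Ideal.Quotient.mk (Ideal.span {(⟨π, hπO⟩ : O)} ^ k) u =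
        Ideal.Quotient.mk (Ideal.span {(⟨π, hπO⟩ : O)} ^ k) c := by
  rw [Ideal.Quotient.eq, Ideal.span_singleton_pow, Ideal.mem_span_singleton']
  constructor
  · rintro ⟨y, hy, huc⟩
    exact ⟨⟨y, hy⟩, Subtype.ext (by push_cast; rw [huc, zpow_natCast]; ring)⟩
  · rintro ⟨y, hy⟩
    refine ⟨y, y.2, ?_⟩
    have := congrArg Subtype.val hy
    push_cast at this
    rw [zpow_natCast]
    linear_combination -this

theorem indicator_adicBall_eq_sum {E : Type*} [AddCommMonoid E] (hπ : π ≠ 0) (hπO : π ∈ O)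
    (k : ℕ) [Fintype (O ⧸ Ideal.span {(⟨π, hπO⟩ : O)} ^ k)] (a : K) (M : ℤ) (g : K → E) :
    (adicBall O π a M).indicator g =
      ∑ r : O ⧸ Ideal.span {(⟨π, hπO⟩ : O)} ^ k,
        (adicBall O π (a + π ^ M * (r.out : K)) (M + k)).indicator g := by
  ext x
  obtain ⟨u, hu⟩ : ∃ u, π ^ (-M) * (x - a) = u := ⟨_, rfl⟩
  simp only [Finset.sum_apply, Set.indicator_apply, mem_adicBall_add_zpow_mul_iff hπ,
    mem_adicBall_iff hπ (x := x), hu]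
  by_cases huO : u ∈ O
  · lift u to O using huO
    simp only [SetLike.coe_mem, if_true, coe_mem_adicBall_iff hπO u, Ideal.Quotient.mk_out,
      Finset.sum_ite_eq, Finset.mem_univ]
  · refine (if_neg huO).trans (Finset.sum_eq_zero fun r _ => if_neg fun hr => huO ?_).symm
    have hr0 : (r.out : K) ∈ adicBall O π 0 0 := by rw [adicBall_zero_zero]; exact r.out.2
    simpa only [adicBall_zero_zero, SetLike.mem_coe] using
      adicBall_subset_of_mem hπ hπO (Nat.cast_nonneg k) hr0 hr

end AdicBall

theorem AddChar.sum_quotient_out_eq_zero {R M F : Type*} [Ring R] [AddCommGroup M] [Module R M]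
    [Field F] {p : Submodule R M} [Fintype (M ⧸ p)] {χ : AddChar M F} (hp : ∀ m ∈ p, χ m = 1)
    {u : M} (hu : χ u ≠ 1) : ∑ r : M ⧸ p, χ r.out = 0 := by
  have hχ {m m' : M} (h : m - m' ∈ p) : χ m = χ m' := by
    rw [← sub_add_cancel m m', AddChar.map_add_eq_mul, hp _ h, one_mul]
  have hshift : (∑ r : M ⧸ p, χ r.out) * χ u = ∑ r : M ⧸ p, χ r.out := by
    rw [Finset.sum_mul]
    refine Fintype.sum_equiv (Equiv.addRight (Submodule.Quotient.mk u)) _ _ fun r => ?_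
    rw [← AddChar.map_add_eq_mul, Equiv.coe_addRight]
    refine hχ ((Submodule.Quotient.eq p).mp ?_)
    simp
  by_contra hS
  exact hu ((mul_eq_left₀ hS).mp hshift)

section Fourier

variable {K Cp : Type*} [Field K] [Field Cp] {O : Subring K} {π : K}

/-- With `χ = ψ ∘ tr`, `localFourier I χ f` is the transform `f̂` of the statement. -/
def localFourier (I : (K → Cp) →ₗ[Cp] Cp) (χ : AddChar K Cp) : (K → Cp) →ₗ[Cp] K → Cp :=
  LinearMap.pi fun y => I ∘ₗ LinearMap.mulRight Cp fun x => χ (x * y)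

theorem localFourier_apply (I : (K → Cp) →ₗ[Cp] Cp) (χ : AddChar K Cp) (f : K → Cp) (y : K) :
    localFourier I χ f y = I (fun x => f x * χ (x * y)) := rfl

variable {I : (K → Cp) →ₗ[Cp] Cp} {χ : AddChar K Cp} {vol : ℤ → Cp}

theorem indicator_adicBall_mul_addChar {b : K} {M : ℤ} (h : ∀ y ∈ O, χ (π ^ M * b * y) = 1)
    (a : K) : (fun x => (adicBall O π a M).indicator 1 x * χ (x * b)) =
      χ (a * b) • (adicBall O π a M).indicator 1 := by
  ext x
  by_cases hx : x ∈ adicBall O π a M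
  · obtain ⟨y, hy, rfl⟩ := hx
    rw [Pi.smul_apply, Set.indicator_of_mem (show _ ∈ adicBall O π a M from ⟨y, hy, rfl⟩),
      add_mul, mul_right_comm, AddChar.map_add_eq_mul, h y hy, smul_eq_mul, Pi.one_apply,
      mul_one, one_mul]
  · simp [hx]

theorem localFourier_indicator_adicBall_of_forall
    (hI : ∀ a N, I ((adicBall O π a N).indicator 1) = vol N) {b : K} {M : ℤ}
    (h : ∀ y ∈ O, χ (π ^ M * b * y) = 1) (a : K) :
    localFourier I χ ((adicBall O π a M).indicator 1) b = χ (a * b) * vol M := by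
  rw [localFourier_apply, indicator_adicBall_mul_addChar h, map_smul, hI, smul_eq_mul]

theorem localFourier_indicator_adicBall_eq_zero (hπ : π ≠ 0) (hπO : π ∈ O)
    [Finite (O ⧸ Ideal.span {(⟨π, hπO⟩ : O)})]
    (hI : ∀ a N, I ((adicBall O π a N).indicator 1) = vol N) {b : K} {M : ℤ} (k : ℕ)
    (hk : ∀ y ∈ O, χ (π ^ (M + k) * b * y) = 1) (hne : ∃ y ∈ O, χ (π ^ M * b * y) ≠ 1) (a : K) :
    localFourier I χ ((adicBall O π a M).indicator 1) b = 0 := by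
  set J := Ideal.span {(⟨π, hπO⟩ : O)}
  have := Ideal.finite_quotient_pow (Submodule.fg_span_singleton (⟨π, hπO⟩ : O)) k
  have := Fintype.ofFinite (O ⧸ J ^ k)
  obtain ⟨u, hu, hχu⟩ := hne
  let ψ : AddChar O Cp :=
    χ.compAddMonoidHom ((AddMonoidHom.mulLeft (π ^ M * b)).comp O.subtype.toAddMonoidHom)
  have hψ : ∀ w ∈ J ^ k, ψ w = 1 := by
    intro w hw
    rw [Ideal.span_singleton_pow, Ideal.mem_span_singleton'] at hw
    obtain ⟨v, rfl⟩ := hw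
    show χ (π ^ M * b * ((v * ⟨π, hπO⟩ ^ k : O) : K)) = 1
    rw [← hk v v.2, zpow_add₀ hπ, zpow_natCast]
    push_cast
    ring_nf
  have hsum : ∑ r : O ⧸ J ^ k, ψ r.out = 0 :=
    AddChar.sum_quotient_out_eq_zero hψ (u := ⟨u, hu⟩) hχu
  calc localFourier I χ ((adicBall O π a M).indicator 1) b
      = ∑ r : O ⧸ J ^ k, localFourier I χ
          ((adicBall O π (a + π ^ M * (r.out : K)) (M + k)).indicator 1) b := by
        rw [indicator_adicBall_eq_sum hπ hπO k a M, map_sum, Finset.sum_apply]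
    _ = ∑ r : O ⧸ J ^ k, χ (a * b) * vol (M + k) * ψ r.out := by
        refine Finset.sum_congr rfl fun r _ => ?_
        rw [localFourier_indicator_adicBall_of_forall hI hk]
        show _ = _ * χ (π ^ M * b * (r.out : K))
        rw [add_mul, mul_right_comm _ (r.out : K), AddChar.map_add_eq_mul]
        ring
    _ = 0 := by rw [← Finset.mul_sum, hsum, mul_zero]

theorem localFourier_indicator_adicBall (hπ : π ≠ 0) (hπO : π ∈ O)
    [Finite (O ⧸ Ideal.span {(⟨π, hπO⟩ : O)})] {δ : ℕ}
    (hχ : ∀ x, (∀ y ∈ O, χ (x * y) = 1) ↔ π ^ δ * x ∈ O)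
    (hpow : ∀ x : K, ∃ n : ℕ, π ^ n * x ∈ O)
    (hI : ∀ a N, I ((adicBall O π a N).indicator 1) = vol N) (a b : K) (M : ℤ) :
    localFourier I χ ((adicBall O π a M).indicator 1) b =
      if π ^ δ * (π ^ M * b) ∈ O then χ (a * b) * vol M else 0 := by
  split_ifs with h
  · exact localFourier_indicator_adicBall_of_forall hI ((hχ _).mpr h) a
  obtain ⟨k, hk⟩ := hpow (π ^ δ * (π ^ M * b))
  refine localFourier_indicator_adicBall_eq_zero hπ hπO hI k ((hχ _).mpr ?_) ?_ a
  · rw [zpow_add₀ hπ, zpow_natCast]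
    convert hk using 1
    ring
  · by_contra! hne
    exact h ((hχ _).mp hne)

theorem integral_indicator_inter_adicBall (hπ : π ≠ 0) (hπO : π ∈ O)
    (hI : ∀ a N, I ((adicBall O π a N).indicator 1) = vol N) (c : K) (N : ℤ) :
    I (((O : Set K) ∩ adicBall O π c N).indicator 1) =
      if π ^ (-min N 0) * c ∈ O then vol (max N 0) else 0 := by
  rw [← adicBall_zero_zero (π := π)]
  rcases le_total 0 N with hN | hN
  · rw [adicBall_inter_adicBall_of_le hπ hπO hN, min_eq_right hN, max_eq_left hN,
      mem_adicBall_iff hπ, sub_zero, apply_ite (fun s : Set K => I (s.indicator 1)), hI,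
      Set.indicator_empty', map_zero]
  · rw [Set.inter_comm, adicBall_inter_adicBall_of_le hπ hπO hN, min_eq_left hN,
      max_eq_right hN, mem_adicBall_iff hπ, zero_sub, mul_neg, neg_mem_iff,
      apply_ite (fun s : Set K => I (s.indicator 1)), hI, Set.indicator_empty', map_zero]

theorem ite_mul_localFourier_indicator_adicBall_mul_inv (hπ : π ≠ 0) (hπO : π ∈ O)
    [Finite (O ⧸ Ideal.span {(⟨π, hπO⟩ : O)})] {δ : ℕ}
    (hχ : ∀ x, (∀ y ∈ O, χ (x * y) = 1) ↔ π ^ δ * x ∈ O)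
    (hpow : ∀ x : K, ∃ n : ℕ, π ^ n * x ∈ O)
    (hI : ∀ a N, I ((adicBall O π a N).indicator 1) = vol N) (t a : K) (N : ℤ) :
    (fun y => (if π ^ δ * y ∈ O then 1 else 0) *
      localFourier I χ ((adicBall O π a N).indicator 1) y * (χ (t * y))⁻¹) =
      vol N • fun y => (adicBall O π 0 (-min (δ : ℤ) (δ + N))).indicator 1 y * χ (y * (a - t)) := by
  ext y
  have hχ' : χ (a * y) * (χ (t * y))⁻¹ = χ (y * (a - t)) := by
    rw [← AddChar.map_neg_eq_inv, ← AddChar.map_add_eq_mul]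
    ring_nf
  have hmin : π ^ min (δ : ℤ) (δ + N) * y ∈ O ↔ π ^ δ * y ∈ O ∧ π ^ δ * (π ^ N * y) ∈ O := by
    rw [← zpow_mul_mem_and_zpow_mul_mem_iff hπ hπO, zpow_natCast, zpow_add₀ hπ, zpow_natCast,
      mul_assoc]
  rw [localFourier_indicator_adicBall hπ hπO hχ hpow hI, Pi.smul_apply, smul_eq_mul,
    Set.indicator_apply, mem_adicBall_iff hπ, neg_neg, sub_zero, hmin]
  by_cases h : π ^ δ * y ∈ O ∧ π ^ δ * (π ^ N * y) ∈ O
  · rw [if_pos h.1, if_pos h.2, if_pos h, Pi.one_apply, ← hχ']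
    ring
  · rw [if_neg h, zero_mul, mul_zero]
    rcases not_and_or.mp h with h | h <;> simp [h]

theorem poisson_summation_indicator_adicBall (hπ : π ≠ 0) (hπO : π ∈ O)
    [Finite (O ⧸ Ideal.span {(⟨π, hπO⟩ : O)})] {δ : ℕ}
    (hχ : ∀ x, (∀ y ∈ O, χ (x * y) = 1) ↔ π ^ δ * x ∈ O)
    (hpow : ∀ x : K, ∃ n : ℕ, π ^ n * x ∈ O)
    {sq q : Cp} (hsq : sq ^ 2 = q) (hq : q ≠ 0)
    (hI : ∀ a N, I ((adicBall O π a N).indicator 1) = sq⁻¹ ^ δ * q ^ (-N)) (t a : K) (N : ℤ) :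
    I ((O : Set K).indicator ((adicBall O π a N).indicator 1 ∘ (· + t))) =
      sq⁻¹ ^ δ * I (fun y => (if π ^ δ * y ∈ O then 1 else 0) *
        localFourier I χ ((adicBall O π a N).indicator 1) y * (χ (t * y))⁻¹) := by
  set j := min (δ : ℤ) (δ + N)
  have hLHS : (O : Set K).indicator ((adicBall O π a N).indicator (1 : K → Cp) ∘ (· + t)) =
      ((O : Set K) ∩ adicBall O π (a - t) N).indicator 1 := by
    rw [← Set.indicator_indicator, ← preimage_add_adicBall hπ t a N]
    congr 1
  have hcond : π ^ δ * (π ^ (-j) * (a - t)) = π ^ (-min N 0) * (a - t) := by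
    rw [← mul_assoc, ← zpow_natCast, ← zpow_add₀ hπ]
    congr 2
    omega
  have hunit : sq⁻¹ ^ δ * sq⁻¹ ^ δ * q ^ (δ : ℤ) = 1 := by
    have hsq0 : sq ≠ 0 := by
      rintro rfl
      exact hq (by rw [← hsq, zero_pow two_ne_zero])
    rw [zpow_natCast, ← hsq, ← mul_pow, ← mul_pow]
    field_simp
    exact one_pow δ
  have hq_pow : q ^ (-N) * q ^ (-(-j)) = q ^ (δ : ℤ) * q ^ (-max N 0) := by
    rw [← zpow_add₀ hq, ← zpow_add₀ hq]
    congr 1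
    omega
  rw [hLHS, integral_indicator_inter_adicBall hπ hπO hI,
    ite_mul_localFourier_indicator_adicBall_mul_inv hπ hπO hχ hpow hI, map_smul,
    ← localFourier_apply, localFourier_indicator_adicBall hπ hπO hχ hpow hI, hcond, zero_mul,
    AddChar.map_zero_eq_one, one_mul, smul_eq_mul]
  split_ifs
  · linear_combination (-(sq⁻¹ ^ δ) ^ 3) * hq_pow - (sq⁻¹ ^ δ * q ^ (-max N 0)) * hunit
  · simp

end Fourier

theorem poisson_summation_local_general
    (ℓ : ℕ) [Fact (Nat.Prime ℓ)]
    (K : Type*) [Field K] [Algebra ℚ_[ℓ] K] [FiniteDimensional ℚ_[ℓ] K]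
    [Algebra ℤ_[ℓ] K] [IsScalarTower ℤ_[ℓ] ℚ_[ℓ] K]
    (Cp : Type*) [NormedField Cp]
    (O : Subring K) (hO : ∀ x : K, x ∈ O ↔ IsIntegral ℤ_[ℓ] x)
    (π : K) (hπ0 : π ≠ 0) (hπO : π ∈ O)
    (hπunif : ¬ IsUnit (⟨π, hπO⟩ : O))
    (hgen : ∀ x (hx : x ∈ O), ¬ IsUnit (⟨x, hx⟩ : O) → ∃ y ∈ O, x = π * y)
    (q : ℕ) (hq1 : 1 < q)
    (hq : Nat.card (O ⧸ Ideal.span {(⟨π, hπO⟩ : O)}) = q)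
    (sq : Cp) (hsq : sq ^ 2 = (q : Cp))
    (δ : ℕ)
    (hδ : ∀ x : K, (∀ y ∈ O, ‖Algebra.trace ℚ_[ℓ] K (x * y)‖ ≤ 1) ↔ π ^ δ * x ∈ O)
    (ψ : AddChar ℚ_[ℓ] Cp) (hψ : ∀ x : ℚ_[ℓ], ψ x = 1 ↔ ‖x‖ ≤ 1)
    (I : (K → Cp) →ₗ[Cp] Cp)
    (hI : ∀ (a : K) (N : ℤ),
      I (fun x => if ∃ y ∈ O, x = a + π ^ N * y then 1 else 0) =
        sq⁻¹ ^ δ * (q : Cp) ^ (-N))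
    (f : K → Cp)
    (hf : ∃ (n : ℕ) (a : Fin n → K) (N : Fin n → ℤ) (c : Fin n → Cp),
      f = ∑ i, c i • (fun x => if ∃ y ∈ O, x = a i + π ^ (N i) * y then (1:Cp) else 0)) :
    ∀ t : K,
      I (fun x => if x ∈ O then f (x + t) else 0) =
        sq⁻¹ ^ δ *
          I (fun y => (if π ^ δ * y ∈ O then 1 else 0) *
            I (fun x => f x * ψ (Algebra.trace ℚ_[ℓ] K (x * y))) *
            (ψ (Algebra.trace ℚ_[ℓ] K (t * y)))⁻¹) := by
  intro t
  have hdvd (c : O) (hc : ¬IsUnit c) : (⟨π, hπO⟩ : O) ∣ c := by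
    obtain ⟨y, hy, hcy⟩ := hgen c c.2 hc
    exact ⟨⟨y, hy⟩, Subtype.ext hcy⟩
  have : Finite (O ⧸ Ideal.span {(⟨π, hπO⟩ : O)}) := Nat.finite_of_card_ne_zero (by omega)
  have hq0 : (q : Cp) ≠ 0 := by
    obtain ⟨n, hn⟩ := natCard_quotient_eq_prime_pow
      (Ideal.mem_span_singleton.mpr (hdvd _ (not_isUnit_natCast hO)))
    rw [← hq, hn, Nat.cast_pow]
    exact pow_ne_zero n (AddChar.natCast_ne_zero_of_forall_eq_one_iff hψ)
  let χ : AddChar K Cp := ψ.compAddMonoidHom (Algebra.trace ℚ_[ℓ] K).toAddMonoidHom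
  have hχ (x : K) : (∀ y ∈ O, χ (x * y) = 1) ↔ π ^ δ * x ∈ O := by
    simp only [← hψ] at hδ
    exact hδ x
  have hball := poisson_summation_indicator_adicBall hπ0 hπO hχ
    (exists_pow_mul_mem hO hπunif hdvd) hsq hq0 hI t
  let L : (K → Cp) →ₗ[Cp] Cp := I ∘ₗ
    { toFun := fun g => (O : Set K).indicator (g ∘ (· + t))
      map_add' := fun g h => Set.indicator_add' _ _ _
      map_smul' := fun c g => Set.indicator_const_smul (O : Set K) c (g ∘ (· + t)) }
  let R : (K → Cp) →ₗ[Cp] Cp := sq⁻¹ ^ δ • I ∘ₗ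
    LinearMap.mulRight Cp (fun y => (χ (t * y))⁻¹) ∘ₗ
    LinearMap.mulLeft Cp (fun y => if π ^ δ * y ∈ O then 1 else 0) ∘ₗ localFourier I χ
  change L f = R f
  obtain ⟨n, a, N, c, rfl⟩ := hf
  simp only [map_sum, map_smul]
  exact Finset.sum_congr rfl fun i _ => congrArg (c i • ·) (hball (a i) (N i))

/-- Poisson-type summation: for any compactly supported locally constant `f` on `K` and
any `t ∈ K`,
`∫_{o_K} f(x+t) dx = q^{-δ/2} ∫_{𝔡⁻¹} f̂(y) ζ^{-tr(ty)} dy`,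
where `f̂(y) = ∫_K f(x)ζ^{tr(xy)}dx` and `𝔡⁻¹ = π^{-δ}O` is the inverse different. -/
theorem poisson_summation_local
    (ℓ : ℕ) [Fact (Nat.Prime ℓ)]
    (K : Type*) [Field K] [Algebra ℚ_[ℓ] K] [FiniteDimensional ℚ_[ℓ] K]
    [Algebra ℤ_[ℓ] K] [IsScalarTower ℤ_[ℓ] ℚ_[ℓ] K]
    (Cp : Type*) [NormedField Cp] [CompleteSpace Cp]
    (O : Subring K) (hO : ∀ x : K, x ∈ O ↔ IsIntegral ℤ_[ℓ] x)
    (π : K) (hπ0 : π ≠ 0) (hπO : π ∈ O)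
    (hπunif : ¬ IsUnit (⟨π, hπO⟩ : O))
    (hgen : ∀ x (hx : x ∈ O), ¬ IsUnit (⟨x, hx⟩ : O) → ∃ y ∈ O, x = π * y)
    (q : ℕ) (hq1 : 1 < q)
    (hq : Nat.card (O ⧸ Ideal.span {(⟨π, hπO⟩ : O)}) = q)
    (sq : Cp) (hsq : sq ^ 2 = (q : Cp))
    (δ : ℕ)
    (hδ : ∀ x : K, (∀ y ∈ O, ‖Algebra.trace ℚ_[ℓ] K (x * y)‖ ≤ 1) ↔ π ^ δ * x ∈ O)
    (ψ : AddChar ℚ_[ℓ] Cp) (hψ : ∀ x : ℚ_[ℓ], ψ x = 1 ↔ ‖x‖ ≤ 1)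
    (I : (K → Cp) →ₗ[Cp] Cp)
    (hI : ∀ (a : K) (N : ℤ),
      I (fun x => if ∃ y ∈ O, x = a + π ^ N * y then 1 else 0) =
        sq⁻¹ ^ δ * (q : Cp) ^ (-N))
    (f : K → Cp)
    (hf : ∃ (n : ℕ) (a : Fin n → K) (N : Fin n → ℤ) (c : Fin n → Cp),
      f = ∑ i, c i • (fun x => if ∃ y ∈ O, x = a i + π ^ (N i) * y then (1:Cp) else 0)) :
    ∀ t : K,
      I (fun x => if x ∈ O then f (x + t) else 0) =
        sq⁻¹ ^ δ *
          I (fun y => (if π ^ δ * y ∈ O then 1 else 0) *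
            I (fun x => f x * ψ (Algebra.trace ℚ_[ℓ] K (x * y))) *
            (ψ (Algebra.trace ℚ_[ℓ] K (t * y)))⁻¹) :=
  poisson_summation_local_general ℓ K Cp O hO π hπ0 hπO hπunif hgen q hq1 hq sq hsq δ hδ ψ hψ I hI f
    hf
end

section
/- Let χ: K^× → C_p^× be a continuous multiplicative character on a local field K with uniformizer π, and suppose |χ(π)|_p ∈ o_p^× with χ(π) ≠ 1 of absolute value 1. If f: K → C_p is a function such that both limits lim_{x→0} f(x)χ(x) and lim_{x→0} f(x)χ(x)χ_λ(x) exist, where χ_λ is the unramified character with χ_λ(π) = λ ∈ o_p^× \ {1}, then lim_{x→0} f(x)χ(x) = 0. -/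
/-!
Along the sequence `π^(n+1) → 0` the twisted function is `f χ` times `λ^(n+1)`. If
`f χ → L ≠ 0`, dividing the two limits shows that `λ^n` converges; but consecutive
powers of `λ` stay at distance `‖λ - 1‖ ≠ 0` from each other since `‖λ‖ = 1`.
-/

open Filter Topology

lemma map_pow_succ_of_map_mul {M₀ M : Type*} [MonoidWithZero M₀] [NoZeroDivisors M₀] [Monoid M]
    {g : M₀ → M} (hmul : ∀ x y : M₀, x ≠ 0 → y ≠ 0 → g (x * y) = g x * g y) {x : M₀}
    (hx : x ≠ 0) (n : ℕ) : g (x ^ (n + 1)) = g x ^ (n + 1) := by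
  induction n with
  | zero => simp
  | succ n ih => rw [pow_succ x, hmul _ _ (pow_ne_zero _ hx) hx, ih, ← pow_succ]

lemma tendsto_pow_succ_nhdsNE_zero {𝕜 : Type*} [NormedDivisionRing 𝕜] {π : 𝕜} (hπ0 : π ≠ 0)
    (hπ1 : ‖π‖ < 1) : Tendsto (fun n : ℕ => π ^ (n + 1)) atTop (𝓝[≠] 0) :=
  tendsto_nhdsWithin_of_tendsto_nhds_of_eventually_within _
    ((tendsto_add_atTop_iff_nat 1).mpr (tendsto_pow_atTop_nhds_zero_of_norm_lt_one hπ1))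
    (Eventually.of_forall fun _ => pow_ne_zero _ hπ0)

lemma norm_pow_succ_sub_pow_of_norm_eq_one {𝕜 : Type*} [NormedDivisionRing 𝕜] {lam : 𝕜}
    (hlam : ‖lam‖ = 1) (n : ℕ) : ‖lam ^ (n + 1) - lam ^ n‖ = ‖lam - 1‖ := by
  rw [pow_succ, ← mul_sub_one, norm_mul, norm_pow, hlam, one_pow, one_mul]

lemma not_tendsto_pow_of_norm_eq_one {𝕜 : Type*} [NormedDivisionRing 𝕜] {lam : 𝕜}
    (hlam1 : ‖lam‖ = 1) (hlam2 : lam ≠ 1) (a : 𝕜) :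
    ¬Tendsto (fun n : ℕ => lam ^ n) atTop (𝓝 a) := by
  intro h
  have hdiff : Tendsto (fun n : ℕ => ‖lam ^ (n + 1) - lam ^ n‖) atTop (𝓝 0) := by
    simpa using (((tendsto_add_atTop_iff_nat 1).mpr h).sub h).norm
  simp only [norm_pow_succ_sub_pow_of_norm_eq_one hlam1] at hdiff
  exact hlam2 (sub_eq_zero.mp (norm_eq_zero.mp (tendsto_nhds_unique tendsto_const_nhds hdiff)))

theorem limit_zero_of_twisted_limits_exist_general
    (K : Type*) [NontriviallyNormedField K]
    (Cp : Type*) [NormedField Cp]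
    (π : K) (hπ0 : π ≠ 0) (hπ1 : ‖π‖ < 1)
    (χ : K → Cp)
    (lam : Cp) (hlam1 : ‖lam‖ = 1) (hlam2 : lam ≠ 1)
    -- the unramified character `χ_λ` with `χ_λ(π) = λ`, trivial on units:
    (χl : K → Cp)
    (hχlmul : ∀ x y : K, x ≠ 0 → y ≠ 0 → χl (x * y) = χl x * χl y)
    (hχlπ : χl π = lam)
    (f : K → Cp) (L : Cp)
    (hL : Tendsto (fun x => f x * χ x) (𝓝[≠] (0 : K)) (𝓝 L))
    (hL' : ∃ L' : Cp, Tendsto (fun x => f x * χ x * χl x) (𝓝[≠] (0 : K)) (𝓝 L')) :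
    L = 0 := by
  obtain ⟨L', hL'⟩ := hL'
  by_contra hL0
  have hseq := tendsto_pow_succ_nhdsNE_zero hπ0 hπ1
  have htwisted : Tendsto (fun n : ℕ => lam ^ (n + 1) * (f (π ^ (n + 1)) * χ (π ^ (n + 1))))
      atTop (𝓝 (L' / L * L)) := by
    rw [div_mul_cancel₀ _ hL0]
    refine (hL'.comp hseq).congr fun n => ?_
    simp only [Function.comp, map_pow_succ_of_map_mul hχlmul hπ0, hχlπ, mul_comm]
  have hpow : Tendsto (fun n : ℕ => lam ^ (n + 1)) atTop (𝓝 (L' / L)) :=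
    (tendsto_mul_iff_of_ne_zero (hL.comp hseq) hL0).mp htwisted
  exact not_tendsto_pow_of_norm_eq_one hlam1 hlam2 _ ((tendsto_add_atTop_iff_nat 1).mp hpow)

/-- Let `K` be a nonarchimedean local field with uniformizer `π`, `χ : K^× → ℂ_p^×` a
multiplicative character, and `χ_λ` the unramified character with `χ_λ(π) = λ` where
`λ ∈ o_p^× \ {1}` (`‖λ‖ = 1`, `λ ≠ 1`).  If both limits `lim_{x→0} f(x)χ(x)` and
`lim_{x→0} f(x)χ(x)χ_λ(x)` exist, then `lim_{x→0} f(x)χ(x) = 0`. -/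
theorem limit_zero_of_twisted_limits_exist
    (K : Type*) [NontriviallyNormedField K]
    (Cp : Type*) [NormedField Cp]
    (π : K) (hπ0 : π ≠ 0) (hπ1 : ‖π‖ < 1)
    -- every nonzero element of `K` is `π^n` times a unit:
    (hval : ∀ x : K, x ≠ 0 → ∃ (n : ℤ) (u : K), ‖u‖ = 1 ∧ x = π ^ n * u)
    (χ : K → Cp)
    (hχmul : ∀ x y : K, x ≠ 0 → y ≠ 0 → χ (x * y) = χ x * χ y)
    (hχ1 : χ 1 = 1)
    (lam : Cp) (hlam1 : ‖lam‖ = 1) (hlam2 : lam ≠ 1)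
    -- the unramified character `χ_λ` with `χ_λ(π) = λ`, trivial on units:
    (χl : K → Cp)
    (hχlmul : ∀ x y : K, x ≠ 0 → y ≠ 0 → χl (x * y) = χl x * χl y)
    (hχlunit : ∀ u : K, ‖u‖ = 1 → χl u = 1)
    (hχlπ : χl π = lam)
    (f : K → Cp) (L : Cp)
    (hL : Tendsto (fun x => f x * χ x) (𝓝[≠] (0 : K)) (𝓝 L))
    (hL' : ∃ L' : Cp, Tendsto (fun x => f x * χ x * χl x) (𝓝[≠] (0 : K)) (𝓝 L')) :
    L = 0 :=
  limit_zero_of_twisted_limits_exist_general K Cp π hπ0 hπ1 χ lam hlam1 hlam2 χl hχlmul hχlπ f L hL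
    hL'
end

section
/- Let χ, χ' be two multiplicative characters K^× → C_p^× of the same modulus (|χ(π)|_p = |χ'(π)|_p) with χ|_{o_K^×} and χ'|_{o_K^×} of finite image. If χ'(π) = χ(π) but χ' ≠ χ, and f: K^× → C_p satisfies lim_{x→0} fχ(x) = L ≠ 0 and lim_{x→0} fχ'(x) exists, then a contradiction arises; hence lim_{x→0} fχ(x) = 0. -/
open Filter Topology

/-!
Since `χ` and `χ'` agree on the powers of `π`, along `x = π ^ k * c` (`k → ∞`) the two
twisted limits are the limit of the common sequence `f(π^k c) χ(π^k)` times `χ c`, resp. `χ' c`.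
Taking `c = 1` shows that the two limits coincide; taking `c = t` then forces
`L χ'(t) = L χ(t)`, which is impossible for `L ≠ 0`.
-/

theorem tendsto_pow_mul_nhdsNE_zero {K : Type*} [NormedDivisionRing K] {π c : K}
    (hπ0 : π ≠ 0) (hπ1 : ‖π‖ < 1) (hc : c ≠ 0) :
    Tendsto (fun k : ℕ => π ^ k * c) atTop (𝓝[≠] 0) :=
  tendsto_nhdsWithin_of_tendsto_nhds_of_eventually_within _
    (by simpa using (tendsto_pow_atTop_nhds_zero_of_norm_lt_one hπ1).mul_const c)
    (Eventually.of_forall fun k => mul_ne_zero (pow_ne_zero k hπ0) hc)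

theorem mul_eq_mul_of_tendsto_mul_const {ι R : Type*} [CommMonoid R] [TopologicalSpace R]
    [ContinuousMul R] [T2Space R] {l : Filter ι} [l.NeBot] {u : ι → R} {a b L L' : R}
    (ha : Tendsto (fun i => u i * a) l (𝓝 L)) (hb : Tendsto (fun i => u i * b) l (𝓝 L')) :
    L * b = L' * a := by
  refine tendsto_nhds_unique (ha.mul_const b) ?_
  simpa only [mul_right_comm _ a b] using hb.mul_const a

theorem apply_pow_eq_of_apply_eq {K M : Type*} [MonoidWithZero K] [NoZeroDivisors K] [Monoid M]
    {χ χ' : K → M} {π : K} (hπ0 : π ≠ 0)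
    (hχmul : ∀ x y : K, x ≠ 0 → y ≠ 0 → χ (x * y) = χ x * χ y)
    (hχ'mul : ∀ x y : K, x ≠ 0 → y ≠ 0 → χ' (x * y) = χ' x * χ' y)
    (h1 : χ' 1 = χ 1) (hππ : χ' π = χ π) (k : ℕ) :
    χ' (π ^ k) = χ (π ^ k) := by
  induction k with
  | zero => simpa using h1
  | succ k ih =>
    rw [pow_succ, hχmul _ _ (pow_ne_zero k hπ0) hπ0, hχ'mul _ _ (pow_ne_zero k hπ0) hπ0, ih, hππ]

theorem mul_apply_eq_of_tendsto_twists {K R : Type*} [NormedDivisionRing K] [CommMonoid R]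
    [TopologicalSpace R] [ContinuousMul R] [T2Space R] {π c : K} (hπ0 : π ≠ 0) (hπ1 : ‖π‖ < 1)
    (hc : c ≠ 0) {χ χ' f : K → R}
    (hχmul : ∀ x y : K, x ≠ 0 → y ≠ 0 → χ (x * y) = χ x * χ y)
    (hχ'mul : ∀ x y : K, x ≠ 0 → y ≠ 0 → χ' (x * y) = χ' x * χ' y)
    (h1 : χ' 1 = χ 1) (hππ : χ' π = χ π) {L L' : R}
    (hL : Tendsto (fun x => f x * χ x) (𝓝[≠] 0) (𝓝 L))
    (hL' : Tendsto (fun x => f x * χ' x) (𝓝[≠] 0) (𝓝 L')) :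
    L * χ' c = L' * χ c := by
  have hseq := tendsto_pow_mul_nhdsNE_zero hπ0 hπ1 hc
  have hsplit (ψ : K → R) (hψmul : ∀ x y : K, x ≠ 0 → y ≠ 0 → ψ (x * y) = ψ x * ψ y) (k : ℕ) :
      f (π ^ k * c) * ψ (π ^ k * c) = f (π ^ k * c) * ψ (π ^ k) * ψ c := by
    rw [hψmul _ _ (pow_ne_zero k hπ0) hc, mul_assoc]
  refine mul_eq_mul_of_tendsto_mul_const (l := atTop)
    (u := fun k => f (π ^ k * c) * χ (π ^ k)) ?_ ?_
  · simpa only [Function.comp_def, hsplit χ hχmul] using hL.comp hseq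
  · simpa only [Function.comp_def, hsplit χ' hχ'mul,
      apply_pow_eq_of_apply_eq hπ0 hχmul hχ'mul h1 hππ] using hL'.comp hseq

theorem limit_zero_of_distinct_twists_general
    (K : Type*) [NontriviallyNormedField K]
    (Cp : Type*) [NormedField Cp]
    (π : K) (hπ0 : π ≠ 0) (hπ1 : ‖π‖ < 1)
    (χ χ' : K → Cp)
    (hχmul : ∀ x y : K, x ≠ 0 → y ≠ 0 → χ (x * y) = χ x * χ y)
    (hχ'mul : ∀ x y : K, x ≠ 0 → y ≠ 0 → χ' (x * y) = χ' x * χ' y)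
    (hχ1 : χ 1 = 1) (hχ'1 : χ' 1 = 1)
    -- equal value at the uniformizer:
    (hππ : χ' π = χ π)
    -- `χ' ≠ χ`, witnessed on a unit:
    (t : K) (ht : ‖t‖ = 1) (htne : χ' t ≠ χ t)
    (f : K → Cp) (L : Cp)
    (hL : Tendsto (fun x => f x * χ x) (𝓝[≠] (0 : K)) (𝓝 L))
    (hL' : ∃ L' : Cp, Tendsto (fun x => f x * χ' x) (𝓝[≠] (0 : K)) (𝓝 L')) :
    L = 0 := by
  obtain ⟨L', hL'⟩ := hL'
  have h1 : χ' 1 = χ 1 := hχ'1.trans hχ1.symm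
  have ht0 : t ≠ 0 := norm_ne_zero_iff.mp (ht ▸ one_ne_zero)
  have hLL' : L = L' := by
    simpa [hχ1, hχ'1] using
      mul_apply_eq_of_tendsto_twists hπ0 hπ1 one_ne_zero hχmul hχ'mul h1 hππ hL hL'
  have htwist := mul_apply_eq_of_tendsto_twists hπ0 hπ1 ht0 hχmul hχ'mul h1 hππ hL hL'
  rw [← hLL'] at htwist
  by_contra hL0
  exact htne (mul_left_cancel₀ hL0 htwist)

/-- Let `χ, χ'` be two multiplicative characters `K^× → ℂ_p^×` of the same modulus
(`|χ(π)|_p = |χ'(π)|_p`), with finite image on units (expressed by triviality on a small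
subgroup `1 + π^n o_K`).  If `χ'(π) = χ(π)` but `χ' ≠ χ` (witnessed on a unit `t`), and
`f : K^× → ℂ_p` is such that `lim_{x→0} f(x)χ(x) = L` and `lim_{x→0} f(x)χ'(x)` exists,
then `L = 0`. -/
theorem limit_zero_of_distinct_twists
    (K : Type*) [NontriviallyNormedField K]
    (Cp : Type*) [NormedField Cp]
    (π : K) (hπ0 : π ≠ 0) (hπ1 : ‖π‖ < 1)
    (hval : ∀ x : K, x ≠ 0 → ∃ (n : ℤ) (u : K), ‖u‖ = 1 ∧ x = π ^ n * u)
    (χ χ' : K → Cp)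
    (hχmul : ∀ x y : K, x ≠ 0 → y ≠ 0 → χ (x * y) = χ x * χ y)
    (hχ'mul : ∀ x y : K, x ≠ 0 → y ≠ 0 → χ' (x * y) = χ' x * χ' y)
    (hχ1 : χ 1 = 1) (hχ'1 : χ' 1 = 1)
    -- same modulus:
    (hmod : ‖χ π‖ = ‖χ' π‖)
    -- equal value at the uniformizer:
    (hππ : χ' π = χ π)
    -- `χ' ≠ χ`, witnessed on a unit:
    (t : K) (ht : ‖t‖ = 1) (htne : χ' t ≠ χ t)
    -- finite image on units: both characters are trivial on `1 + π^n o_K` for some `n`: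
    (hsmall : ∃ n : ℕ, ∀ u : K, ‖u - 1‖ ≤ ‖π‖ ^ n → χ u = 1 ∧ χ' u = 1)
    (f : K → Cp) (L : Cp)
    (hL : Tendsto (fun x => f x * χ x) (𝓝[≠] (0 : K)) (𝓝 L))
    (hL' : ∃ L' : Cp, Tendsto (fun x => f x * χ' x) (𝓝[≠] (0 : K)) (𝓝 L')) :
    L = 0 :=
  limit_zero_of_distinct_twists_general K Cp π hπ0 hπ1 χ χ' hχmul hχ'mul hχ1 hχ'1 hππ t ht htne f L
    hL hL'
end

section
/- (Schwartz class filtration) Let c ≥ 1, f a dissipative function on a local field K (continuous, vanishing at infinity, valued in o_p), and χ a multiplicative character of modulus c such that fχ extends to a dissipative function on K. Then for every c' with 1 ≤ c' < c and every character χ' of modulus c', lim_{x→0} f(x)χ'(x) = 0. -/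
/-!
Write `x = π ^ n * u` with `‖u‖ = 1`. Multiplicativity gives `‖χ x‖ = c ^ n` and
`‖χ' x‖ = c' ^ n`, so `‖f x * χ' x‖ = ‖g x‖ * (c' / c) ^ n ≤ (c' / c) ^ n`, and `n → ∞` as `x → 0`.
-/

open Filter Topology

section

variable {K Cp : Type*} [NormedDivisionRing K] [NormedDivisionRing Cp]

lemma norm_map_pow_mul_of_norm_eq_one {χ : K → Cp}
    (hmul : ∀ x y : K, x ≠ 0 → y ≠ 0 → χ (x * y) = χ x * χ y)
    (hunit : ∀ u : K, ‖u‖ = 1 → ‖χ u‖ = 1) {π u : K} (hπ : π ≠ 0) (hu : ‖u‖ = 1) (n : ℕ) :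
    ‖χ (π ^ n * u)‖ = ‖χ π‖ ^ n := by
  have hu0 : u ≠ 0 := norm_ne_zero_iff.1 (hu ▸ one_ne_zero)
  induction n with
  | zero => simpa using hunit u hu
  | succ n ih =>
    rw [pow_succ', mul_assoc, hmul _ _ hπ (mul_ne_zero (pow_ne_zero n hπ) hu0), norm_mul, ih,
      pow_succ']

lemma eventually_exists_pow_mul_of_norm_eq_one {π : K} (hπ0 : π ≠ 0) (hπ1 : ‖π‖ < 1)
    (hval : ∀ x : K, x ≠ 0 → ∃ (n : ℤ) (u : K), ‖u‖ = 1 ∧ x = π ^ n * u) (N : ℕ) :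
    ∀ᶠ x in 𝓝[≠] (0 : K), ∃ n : ℕ, N ≤ n ∧ ∃ u : K, ‖u‖ = 1 ∧ x = π ^ n * u := by
  have hπpos : 0 < ‖π‖ := norm_pos_iff.2 hπ0
  have hsmall : ∀ᶠ x in 𝓝[≠] (0 : K), ‖x‖ < ‖π‖ ^ N :=
    nhdsWithin_le_nhds (eventually_norm_sub_lt (0 : K) (pow_pos hπpos N) |>.mono
      fun x hx => by simpa using hx)
  filter_upwards [hsmall, self_mem_nhdsWithin] with x hx hx0
  obtain ⟨n, u, hu, rfl⟩ := hval x hx0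
  rw [norm_mul, norm_zpow, hu, mul_one, ← zpow_natCast,
    zpow_lt_zpow_iff_right_of_lt_one₀ hπpos hπ1] at hx
  lift n to ℕ using by omega
  exact ⟨n, by omega, u, hu, by rw [zpow_natCast]⟩

end

theorem schwartz_class_filtration_general
    (K : Type*) [NontriviallyNormedField K]
    (Cp : Type*) [NormedField Cp]
    (π : K) (hπ0 : π ≠ 0) (hπ1 : ‖π‖ < 1)
    (hval : ∀ x : K, x ≠ 0 → ∃ (n : ℤ) (u : K), ‖u‖ = 1 ∧ x = π ^ n * u)
    (c c' : ℝ) (hcc : c' < c)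
    (χ χ' : K → Cp)
    (hχmul : ∀ x y : K, x ≠ 0 → y ≠ 0 → χ (x * y) = χ x * χ y)
    (hχ'mul : ∀ x y : K, x ≠ 0 → y ≠ 0 → χ' (x * y) = χ' x * χ' y)
    (hχunit : ∀ u : K, ‖u‖ = 1 → ‖χ u‖ = 1)
    (hχ'unit : ∀ u : K, ‖u‖ = 1 → ‖χ' u‖ = 1)
    (hχmod : ‖χ π‖ = c) (hχ'mod : ‖χ' π‖ = c')
    (f : K → Cp)
    -- `fχ` extends to a dissipative function `g` on `K`:
    (g : K → Cp)
    (hgb : ∀ x : K, ‖g x‖ ≤ 1)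
    (hgf : ∀ x : K, x ≠ 0 → g x = f x * χ x) :
    Tendsto (fun x => f x * χ' x) (𝓝[≠] (0 : K)) (𝓝 0) := by
  subst hχmod hχ'mod
  set ρ := ‖χ' π‖ / ‖χ π‖
  have hχπ : 0 < ‖χ π‖ := (norm_nonneg _).trans_lt hcc
  have hρ1 : ρ < 1 := (div_lt_one hχπ).2 hcc
  have hbound (n : ℕ) (u : K) (hu : ‖u‖ = 1) :
      ‖f (π ^ n * u) * χ' (π ^ n * u)‖ ≤ ρ ^ n := by
    have hx : π ^ n * u ≠ 0 :=
      mul_ne_zero (pow_ne_zero n hπ0) (norm_ne_zero_iff.1 (hu ▸ one_ne_zero))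
    calc ‖f (π ^ n * u) * χ' (π ^ n * u)‖ = ‖f (π ^ n * u) * χ (π ^ n * u)‖ * ρ ^ n := by
          rw [norm_mul, norm_mul, norm_map_pow_mul_of_norm_eq_one hχmul hχunit hπ0 hu,
            norm_map_pow_mul_of_norm_eq_one hχ'mul hχ'unit hπ0 hu, div_pow]
          field_simp
      _ = ‖g (π ^ n * u)‖ * ρ ^ n := by rw [hgf _ hx]
      _ ≤ ρ ^ n := mul_le_of_le_one_left (by positivity) (hgb _)
  rw [NormedAddGroup.tendsto_nhds_zero]
  intro ε hε
  obtain ⟨N, hN⟩ := exists_pow_lt_of_lt_one hε hρ1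
  filter_upwards [eventually_exists_pow_mul_of_norm_eq_one hπ0 hπ1 hval N]
    with x ⟨n, hNn, u, hu, hx⟩
  rw [hx]
  exact (hbound n u hu).trans_lt <|
    (pow_le_pow_of_le_one (by positivity) hρ1.le hNn).trans_lt hN

/-- Schwartz class filtration.  Let `c ≥ 1`, `f` a dissipative function on a local field
`K` (continuous, vanishing at infinity, valued in `o_p`), and `χ` a multiplicative
character of modulus `c` (i.e. `‖χ(π)‖ = c`, and `‖χ(u)‖ = 1` on units since `χ` has
finite image there) such that `fχ` extends to a dissipative function on `K`.  Then for
every `c'` with `1 ≤ c' < c` and every character `χ'` of modulus `c'`,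
`lim_{x→0} f(x)χ'(x) = 0`. -/
theorem schwartz_class_filtration
    (K : Type*) [NontriviallyNormedField K]
    (Cp : Type*) [NormedField Cp]
    (π : K) (hπ0 : π ≠ 0) (hπ1 : ‖π‖ < 1)
    (hval : ∀ x : K, x ≠ 0 → ∃ (n : ℤ) (u : K), ‖u‖ = 1 ∧ x = π ^ n * u)
    (c c' : ℝ) (hc : 1 ≤ c) (hc' : 1 ≤ c') (hcc : c' < c)
    (χ χ' : K → Cp)
    (hχmul : ∀ x y : K, x ≠ 0 → y ≠ 0 → χ (x * y) = χ x * χ y)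
    (hχ'mul : ∀ x y : K, x ≠ 0 → y ≠ 0 → χ' (x * y) = χ' x * χ' y)
    (hχ1 : χ 1 = 1) (hχ'1 : χ' 1 = 1)
    (hχunit : ∀ u : K, ‖u‖ = 1 → ‖χ u‖ = 1)
    (hχ'unit : ∀ u : K, ‖u‖ = 1 → ‖χ' u‖ = 1)
    (hχmod : ‖χ π‖ = c) (hχ'mod : ‖χ' π‖ = c')
    -- `f` is dissipative:
    (f : K → Cp) (hfc : Continuous f)
    (hfinf : Tendsto f (cocompact K) (𝓝 0))
    (hfb : ∀ x : K, ‖f x‖ ≤ 1)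
    -- `fχ` extends to a dissipative function `g` on `K`:
    (g : K → Cp) (hgc : Continuous g)
    (hginf : Tendsto g (cocompact K) (𝓝 0))
    (hgb : ∀ x : K, ‖g x‖ ≤ 1)
    (hgf : ∀ x : K, x ≠ 0 → g x = f x * χ x) :
    Tendsto (fun x => f x * χ' x) (𝓝[≠] (0 : K)) (𝓝 0) :=
  schwartz_class_filtration_general K Cp π hπ0 hπ1 hval c c' hcc χ χ' hχmul hχ'mul hχunit hχ'unit
    hχmod hχ'mod f g hgb hgf
end
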